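/- Let G be a connected (claw, P_2 + 3P_1)-free graph containing three cut vertices x, y, z that induce a triangle in G. Then each of x, y, and z is a Gallai vertex of G. -/

import Mathlib

open SimpleGraph

/-- `p` is a longest path of `G`: it is a path, and no path of `G` is longer. -/
def IsLongestPath {V : Type*} (G : SimpleGraph V) {u v : V} (p : G.Walk u v) : Prop :=
  p.IsPath ∧ ∀ (x y : V) (q : G.Walk x y), q.IsPath → q.length ≤ p.length

/-- `v` is a Gallai vertex of `G`: it lies on every longest path of `G`. -/
def IsGallaiVertex {V : Type*} (G : SimpleGraph V) (v : V) : Prop :=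
  ∀ (x y : V) (p : G.Walk x y), IsLongestPath G p → v ∈ p.support

/-- `G` is `H`-free: no induced subgraph of `G` is isomorphic to `H`. -/
def Free {W V : Type*} (H : SimpleGraph W) (G : SimpleGraph V) : Prop :=
  IsEmpty (H ↪g G)

/-- The claw `K_{1,3}`. -/
def claw : SimpleGraph (Fin 1 ⊕ Fin 3) := completeBipartiteGraph (Fin 1) (Fin 3)

/-- `P_3 + 2P_1`: a three-vertex path together with two isolated vertices. -/
def P3_2P1 : SimpleGraph (Fin 5) := fromEdgeSet {s(0,1), s(1,2)}
/-- `K_3 + 2P_1`: a triangle together with two isolated vertices. -/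
def K3_2P1 : SimpleGraph (Fin 5) := fromEdgeSet {s(0,1), s(1,2), s(0,2)}
/-- `2P_2 + P_1`: two disjoint edges together with one isolated vertex. -/
def twoP2_P1 : SimpleGraph (Fin 5) := fromEdgeSet {s(0,1), s(2,3)}
/-- `P_2 + 3P_1`: an edge together with three isolated vertices. -/
def P2_3P1 : SimpleGraph (Fin 5) := fromEdgeSet {s(0,1)}
/-- `2P_2`: the disjoint union of two edges. -/
def twoP2 : SimpleGraph (Fin 4) := fromEdgeSet {s(0,1), s(2,3)}
/-- The paw `N_{1,0,0}`: a triangle with a pendant vertex. -/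
def paw : SimpleGraph (Fin 4) := fromEdgeSet {s(0,1), s(1,2), s(0,2), s(2,3)}
/-- The diamond: `K_4` minus an edge. -/
def diamond : SimpleGraph (Fin 4) := fromEdgeSet {s(0,1), s(0,2), s(0,3), s(1,2), s(1,3)}
/-- The bull `N_{1,1,0}`: a triangle with two pendant vertices at distinct vertices. -/
def bull : SimpleGraph (Fin 5) := fromEdgeSet {s(0,1), s(1,2), s(0,2), s(0,3), s(1,4)}
/-- `N_{2,0,0}`: a triangle with a path of length two appended at one vertex. -/
def N200 : SimpleGraph (Fin 5) := fromEdgeSet {s(0,1), s(1,2), s(0,2), s(0,3), s(3,4)}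
/-- `N_{1,0,0} + P_1`: the paw together with an isolated vertex. -/
def paw_P1 : SimpleGraph (Fin 5) := fromEdgeSet {s(0,1), s(1,2), s(0,2), s(0,3)}
/-- `K_3 + P_2`: a triangle together with a disjoint edge. -/
def K3_P2 : SimpleGraph (Fin 5) := fromEdgeSet {s(0,1), s(1,2), s(0,2), s(3,4)}

/-- `x` is a cut vertex of `G`: deleting `x` leaves a disconnected graph. -/
def IsCutVertex {V : Type*} (G : SimpleGraph V) (x : V) : Prop :=
  ¬ (G.induce {y | y ≠ x}).Preconnected

/-- A linear forest: an acyclic graph in which every vertex has degree at most two,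
i.e. a graph every connected component of which is a path. -/
def IsLinearForest {V : Type*} (G : SimpleGraph V) : Prop :=
  G.IsAcyclic ∧ ∀ v : V, (G.neighborSet v).ncard ≤ 2

/-- A 5-ring: the vertices can be partitioned into five nonempty stable sets
`S 0, …, S 4` such that (indices mod 5) `S i` is complete to `S (i±1)` and
anticomplete to `S (i±2)`. -/
def Is5Ring {V : Type*} (G : SimpleGraph V) : Prop :=
  ∃ S : Fin 5 → Set V,
    (∀ i, (S i).Nonempty) ∧
    (∀ v : V, ∃! i, v ∈ S i) ∧
    (∀ i, ∀ u ∈ S i, ∀ v ∈ S i, ¬ G.Adj u v) ∧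
    (∀ i, ∀ u ∈ S i, ∀ v ∈ S (i + 1), G.Adj u v) ∧
    (∀ i, ∀ u ∈ S i, ∀ v ∈ S (i + 2), ¬ G.Adj u v)

/-
Let `P` be a longest path avoiding `x`. Each vertex `i` of the triangle, being a cut vertex, has a
nonempty branch: the vertices it separates from the other two. The three branches are pairwise
disjoint and no edge joins two of them. As `x ∉ P`, the ends of `P` are adjacent neither to `x`
nor to each other (otherwise `P` extends, directly or after closing it into a cycle). Claw-freeness
at `y`, `z` and `P₂ + 3P₁`-freeness make every vertex outside the branches adjacent to `x`, so
each end of `P` lies in a branch. If `P` left the branch of one end, it would run through its root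
`y` (or `z`) to a vertex `s` outside it; the claw at `y` forces `x ∼ s`, and `x` could be inserted
between `y` and `s`. So both ends lie in one branch, and with a vertex of a second branch and an
edge at the root of the third they induce `P₂ + 3P₁`.
-/

section InducedCopies

variable {V : Type*} {G : SimpleGraph V}

theorem not_free_claw {c v₁ v₂ v₃ : V} (h₁ : G.Adj c v₁) (h₂ : G.Adj c v₂) (h₃ : G.Adj c v₃)
    (h₁₂ : v₁ ≠ v₂) (h₁₃ : v₁ ≠ v₃) (h₂₃ : v₂ ≠ v₃)
    (n₁₂ : ¬G.Adj v₁ v₂) (n₁₃ : ¬G.Adj v₁ v₃) (n₂₃ : ¬G.Adj v₂ v₃) : ¬_root_.Free claw G := by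
  intro h
  let f : Fin 1 ⊕ Fin 3 → V := Sum.elim (fun _ => c) ![v₁, v₂, v₃]
  have hf : ∀ a b, G.Adj (f a) (f b) ↔ claw.Adj a b := by
    rintro (i | i) (j | j) <;> fin_cases i <;> fin_cases j <;>
      simp [f, claw, G.adj_comm _ c, h₁, h₂, h₃, n₁₂, n₁₃, n₂₃, G.adj_comm v₂ v₁,
        G.adj_comm v₃ v₁, G.adj_comm v₃ v₂]
  have hinj : Function.Injective f := by
    rintro (i | i) (j | j) <;> fin_cases i <;> fin_cases j <;>
      simp [f, h₁.ne, h₂.ne, h₃.ne, h₁.ne.symm, h₂.ne.symm, h₃.ne.symm, h₁₂, h₁₃, h₂₃,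
        h₁₂.symm, h₁₃.symm, h₂₃.symm]
  exact h.false ⟨⟨f, hinj⟩, hf _ _⟩

theorem not_free_P2_3P1 {v₀ v₁ v₂ v₃ v₄ : V} (h₀₁ : G.Adj v₀ v₁)
    (h₂₃ : v₂ ≠ v₃) (h₂₄ : v₂ ≠ v₄) (h₃₄ : v₃ ≠ v₄)
    (n₀₂ : ¬G.Adj v₀ v₂) (n₀₃ : ¬G.Adj v₀ v₃) (n₀₄ : ¬G.Adj v₀ v₄)
    (n₁₂ : ¬G.Adj v₁ v₂) (n₁₃ : ¬G.Adj v₁ v₃) (n₁₄ : ¬G.Adj v₁ v₄)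
    (n₂₃ : ¬G.Adj v₂ v₃) (n₂₄ : ¬G.Adj v₂ v₄) (n₃₄ : ¬G.Adj v₃ v₄) : ¬_root_.Free P2_3P1 G := by
  intro h
  let f : Fin 5 → V := ![v₀, v₁, v₂, v₃, v₄]
  have hf : ∀ a b, G.Adj (f a) (f b) ↔ P2_3P1.Adj a b := by
    intro a b
    fin_cases a <;> fin_cases b <;>
      simp [f, P2_3P1, h₀₁.symm, G.adj_comm v₂ v₀, G.adj_comm v₃ v₀, G.adj_comm v₄ v₀,
        G.adj_comm v₂ v₁, G.adj_comm v₃ v₁, G.adj_comm v₄ v₁, G.adj_comm v₃ v₂, G.adj_comm v₄ v₂,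
        G.adj_comm v₄ v₃, *]
  have hinj : Function.Injective f := by
    intro a b hab
    have hnbhd : ∀ c, P2_3P1.Adj a c ↔ P2_3P1.Adj b c := fun c => by rw [← hf, ← hf, hab]
    fin_cases a <;> fin_cases b <;> first | rfl | simp_all [f, P2_3P1]
  exact h.false ⟨⟨f, hinj⟩, hf _ _⟩

end InducedCopies

namespace SimpleGraph.Walk

variable {V : Type*} {G : SimpleGraph V}

theorem exists_perm_cons_support_of_mem_darts {u w x : V} (p : G.Walk u w) {d : G.Dart}
    (hd : d ∈ p.darts) (h₁ : G.Adj d.fst x) (h₂ : G.Adj x d.snd) :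
    ∃ q : G.Walk u w, q.length = p.length + 1 ∧ q.support.Perm (x :: p.support) := by
  induction p with
  | nil => simp at hd
  | cons h p ih =>
    obtain rfl | hd := List.mem_cons.mp hd
    · exact ⟨cons h₁ (cons h₂ p), by simp, by simpa using List.Perm.swap _ _ _⟩
    · obtain ⟨q, hlen, hperm⟩ := ih hd
      exact ⟨cons h q, by simp [hlen], by simpa using (hperm.cons _).trans (List.Perm.swap _ _ _)⟩

theorem IsPath.exists_isPath_length_succ_of_adj {u w t v : V} {p : G.Walk u w} (hp : p.IsPath)
    (hlen : 2 ≤ p.length) (hwu : G.Adj w u) (hv : v ∈ p.support) (ht : t ∉ p.support)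
    (htv : G.Adj t v) : ∃ (b : V) (q : G.Walk t b), q.IsPath ∧ q.length = p.length + 1 := by
  classical
  have hc : (cons hwu p).IsCycle := by
    refine (cons_isCycle_iff p hwu).mpr ⟨hp, fun he => ?_⟩
    have := hp.length_eq_one_of_mem_edges (Sym2.eq_swap ▸ he)
    omega
  have hvc : v ∈ (cons hwu p).support := by simp [hv]
  set c := (cons hwu p).rotate v hvc
  have hcc : c.IsCycle := (isCycle_rotate hvc).mpr hc
  have htc : t ∉ c.dropLast.support := by
    rw [support_dropLast hcc.not_nil]
    intro h
    have : t ∈ (cons hwu p).support := (mem_support_rotate_iff ..).mp (List.dropLast_subset _ h)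
    rw [support_cons, List.mem_cons] at this
    exact this.elim (fun htw => ht (htw ▸ p.end_mem_support)) ht
  refine ⟨_, cons htv c.dropLast, hcc.isPath_dropLast.cons htc, ?_⟩
  simp [c, length_dropLast]

end SimpleGraph.Walk

namespace IsLongestPath

variable {V : Type*} {G : SimpleGraph V} {u w : V} {P : G.Walk u w}

theorem reverse (hP : IsLongestPath G P) : IsLongestPath G P.reverse :=
  ⟨hP.1.reverse, by simpa using hP.2⟩

theorem not_adj_start (hP : IsLongestPath G P) {t : V} (ht : t ∉ P.support) : ¬G.Adj t u :=
  fun h => by simpa using hP.2 _ _ (Walk.cons h P) (hP.1.cons ht)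

theorem not_adj_of_mem_darts (hP : IsLongestPath G P) {d : G.Dart} (hd : d ∈ P.darts) {x : V}
    (hx : x ∉ P.support) (h₁ : G.Adj d.fst x) : ¬G.Adj x d.snd := fun h₂ => by
  obtain ⟨q, hlen, hperm⟩ := P.exists_perm_cons_support_of_mem_darts hd h₁ h₂
  have hq : q.IsPath :=
    (Walk.isPath_def _).mpr (hperm.nodup_iff.mpr (List.nodup_cons.mpr ⟨hx, hP.1.support_nodup⟩))
  have := hP.2 _ _ q hq
  omega

theorem not_adj_end_start (hP : IsLongestPath G P) (hG : G.Preconnected) (hlen : 2 ≤ P.length)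
    {x : V} (hx : x ∉ P.support) : ¬G.Adj w u := fun hwu => by
  obtain ⟨d, -, hd₁, hd₂⟩ :=
    (hG u x).some.exists_boundary_dart {v | v ∈ P.support} P.start_mem_support hx
  obtain ⟨_, q, hq, hlen'⟩ := hP.1.exists_isPath_length_succ_of_adj hlen hwu hd₁ hd₂ d.adj.symm
  have := hP.2 _ _ q hq
  omega

end IsLongestPath

namespace SimpleGraph

variable {V : Type*} {G : SimpleGraph V} {a b c s t u v w x y z : V}

/-- The vertices that `x` separates from `y`: when `x ≠ y`, the union of the components of
`G - x` not containing `y`. -/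
def branch (G : SimpleGraph V) (x y : V) : Set V :=
  {v | v ≠ x ∧ ∀ p : G.Walk v y, x ∈ p.support}

theorem mem_branch_of_adj (hv : v ∈ G.branch x y) (h : G.Adj v w) (hw : w ≠ x) :
    w ∈ G.branch x y :=
  ⟨hw, fun p => by simpa [hv.1.symm] using hv.2 (.cons h p)⟩

theorem not_adj_of_mem_branch (hv : v ∈ G.branch x y) (hw : w ∉ G.branch x y) (hwx : w ≠ x) :
    ¬G.Adj v w :=
  fun h => hw (mem_branch_of_adj hv h hwx)

theorem notMem_branch_right (hxy : x ≠ y) : y ∉ G.branch x y :=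
  fun hy => hxy (by simpa using hy.2 .nil)

theorem branch_subset_of_adj (hyz : G.Adj y z) (hy : y ≠ x) : G.branch x y ⊆ G.branch x z :=
  fun _ hv => ⟨hv.1, fun p => by simpa [hy.symm] using hv.2 (p.concat hyz.symm)⟩

theorem branch_eq_of_adj (hyz : G.Adj y z) (hy : y ≠ x) (hz : z ≠ x) :
    G.branch x y = G.branch x z :=
  (branch_subset_of_adj hyz hy).antisymm (branch_subset_of_adj hyz.symm hz)

theorem disjoint_branch (hG : G.Preconnected) (hxy : x ≠ y) :
    Disjoint (G.branch x y) (G.branch y x) := by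
  classical
  refine Set.disjoint_left.mpr fun v hv hv' => ?_
  obtain ⟨p, hp⟩ := (hG v y).exists_isPath
  have hx := hv.2 p
  exact Walk.endpoint_notMem_support_takeUntil hp hx hxy.symm (hv'.2 (p.takeUntil x hx))

theorem ne_and_not_adj_of_mem_branch_of_mem_branch (hG : G.Preconnected) (hxy : x ≠ y)
    (hv : v ∈ G.branch x y) (hw : w ∈ G.branch y x) : v ≠ w ∧ ¬G.Adj v w := by
  have hw' : w ∉ G.branch x y := Set.disjoint_right.mp (disjoint_branch hG hxy) hw
  have hwx : w ≠ x := fun h => notMem_branch_right hxy.symm (h ▸ hw)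
  exact ⟨fun h => hw' (h ▸ hv), not_adj_of_mem_branch hv hw' hwx⟩

theorem exists_dart_of_mem_branch (p : G.Walk u w) (hu : u ∈ G.branch x y)
    (hw : w ∉ G.branch x y) (hwx : w ≠ x) : ∃ d ∈ p.darts, d.fst = x ∧ d.snd ∉ G.branch x y := by
  obtain ⟨d, hd, h₁, h₂⟩ :=
    p.exists_boundary_dart (insert x (G.branch x y)) (Or.inr hu) (by simp [hw, hwx])
  simp only [Set.mem_insert_iff, not_or] at h₁ h₂
  exact ⟨d, hd, h₁.resolve_right fun h => h₂.2 (mem_branch_of_adj h d.adj h₂.1), h₂.2⟩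

theorem _root_.IsCutVertex.exists_adj_mem_branch
    (hx : IsCutVertex G x) (hG : G.Preconnected) (hy : y ≠ x) : ∃ b ∈ G.branch x y, G.Adj b x := by
  obtain ⟨v, hv⟩ : ∃ v, v ∈ G.branch x y := by
    by_contra! h
    refine hx fun a b => ?_
    have reach : ∀ a : {v // v ≠ x}, (G.induce {v | v ≠ x}).Reachable a ⟨y, hy⟩ := by
      rintro ⟨a, ha⟩
      obtain ⟨p, hp⟩ : ∃ p : G.Walk a y, x ∉ p.support := by simpa [branch, ha] using h a
      exact ⟨p.induce {v | v ≠ x} fun v hv (hvx : v = x) => hp (hvx ▸ hv)⟩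
    exact (reach a).trans (reach b).symm
  obtain ⟨d, -, hd₁, hd₂⟩ := (hG v x).some.exists_boundary_dart _ hv fun h => h.1 rfl
  have hdx : d.snd = x := by
    by_contra hne
    exact hd₂ (mem_branch_of_adj hd₁ d.adj hne)
  exact ⟨d.fst, hd₁, hdx ▸ d.adj⟩

theorem adj_of_free_claw (h1 : _root_.Free claw G) (hb : b ∈ G.branch y x) (hby : G.Adj b y)
    (hxy : G.Adj x y) (hsy : G.Adj s y) (hs : s ∉ G.branch y x) (hsx : s ≠ x) : G.Adj x s := by
  by_contra hxs
  have hx : x ∉ G.branch y x := notMem_branch_right hxy.ne'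
  exact not_free_claw hxy.symm hsy.symm hby.symm hsx.symm (fun h => hx (h ▸ hb))
    (fun h => hs (h ▸ hb)) hxs (fun h => not_adj_of_mem_branch hb hx hxy.ne h.symm)
    (fun h => not_adj_of_mem_branch hb hs hsy.ne h.symm) h1

theorem not_free_P2_3P1_of_mem_branch (hG : G.Preconnected) {i j k : V} (hij : G.Adj i j)
    (hjk : G.Adj j k) (hik : G.Adj i k) (hu : u ∈ G.branch i j) (hw : w ∈ G.branch i j)
    (huw : u ≠ w) (huw' : ¬G.Adj u w) (ht : t ∈ G.branch j i) (hc : c ∈ G.branch k j)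
    (hck : G.Adj c k) : ¬_root_.Free P2_3P1 G := by
  have hBi : G.branch i j = G.branch i k := branch_eq_of_adj hjk hij.ne' hik.ne'
  have hBj : G.branch j i = G.branch j k := branch_eq_of_adj hik hij.ne hjk.ne'
  have hBk : G.branch k j = G.branch k i := branch_eq_of_adj hij.symm hjk.ne hik.ne
  have hut := ne_and_not_adj_of_mem_branch_of_mem_branch hG hij.ne hu ht
  have hwt := ne_and_not_adj_of_mem_branch_of_mem_branch hG hij.ne hw ht
  have hcu := ne_and_not_adj_of_mem_branch_of_mem_branch hG hik.ne' (hBk ▸ hc) (hBi ▸ hu)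
  have hcw := ne_and_not_adj_of_mem_branch_of_mem_branch hG hik.ne' (hBk ▸ hc) (hBi ▸ hw)
  have hct := ne_and_not_adj_of_mem_branch_of_mem_branch hG hjk.ne' hc (hBj ▸ ht)
  have hki : k ∉ G.branch i j := hBi ▸ notMem_branch_right hik.ne
  have hkj : k ∉ G.branch j i := hBj ▸ notMem_branch_right hjk.ne
  exact not_free_P2_3P1 hck.symm huw hut.1 hwt.1
    (fun h => not_adj_of_mem_branch hu hki hik.ne' h.symm)
    (fun h => not_adj_of_mem_branch hw hki hik.ne' h.symm)
    (fun h => not_adj_of_mem_branch ht hkj hjk.ne' h.symm) hcu.2 hcw.2 hct.2 huw' hut.2 hwt.2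

theorem adj_of_notMem_branch (hG : G.Preconnected) (h1 : _root_.Free claw G)
    (h2 : _root_.Free P2_3P1 G) (hxy : G.Adj x y) (hyz : G.Adj y z) (hxz : G.Adj x z)
    (ha : a ∈ G.branch x y) (hb : b ∈ G.branch y x) (hby : G.Adj b y) (hc : c ∈ G.branch z x)
    (hcz : G.Adj c z) (hvx : v ≠ x) (hva : v ∉ G.branch x y) (hvb : v ∉ G.branch y x)
    (hvc : v ∉ G.branch z x) : G.Adj v x := by
  obtain rfl | hvy := eq_or_ne v y
  · exact hxy.symm
  obtain rfl | hvz := eq_or_ne v z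
  · exact hxz.symm
  obtain ⟨s, hvs⟩ : ∃ s, G.Adj v s := ⟨_, (hG v x).some.adj_snd (Walk.not_nil_of_ne hvx)⟩
  obtain rfl | hsx := eq_or_ne s x
  · exact hvs
  obtain rfl | hsy := eq_or_ne s y
  · exact (adj_of_free_claw h1 hb hby hxy hvs hvb hvx).symm
  obtain rfl | hsz := eq_or_ne s z
  · exact (adj_of_free_claw h1 hc hcz hxz hvs hvc hvx).symm
  have hsa : s ∉ G.branch x y := fun h => hva (mem_branch_of_adj h hvs.symm hvx)
  have hsb : s ∉ G.branch y x := fun h => hvb (mem_branch_of_adj h hvs.symm hvy)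
  have hsc : s ∉ G.branch z x := fun h => hvc (mem_branch_of_adj h hvs.symm hvz)
  have hab := ne_and_not_adj_of_mem_branch_of_mem_branch hG hxy.ne ha hb
  have hac := ne_and_not_adj_of_mem_branch_of_mem_branch hG hxz.ne
    (branch_eq_of_adj hyz hxy.ne' hxz.ne' ▸ ha) hc
  have hbc := ne_and_not_adj_of_mem_branch_of_mem_branch hG hyz.ne
    (branch_eq_of_adj hxz hxy.ne hyz.ne' ▸ hb) (branch_eq_of_adj hxy hxz.ne hyz.ne ▸ hc)
  exact absurd h2 (not_free_P2_3P1 hvs hab.1 hac.1 hbc.1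
    (fun h => not_adj_of_mem_branch ha hva hvx h.symm)
    (fun h => not_adj_of_mem_branch hb hvb hvy h.symm)
    (fun h => not_adj_of_mem_branch hc hvc hvz h.symm)
    (fun h => not_adj_of_mem_branch ha hsa hsx h.symm)
    (fun h => not_adj_of_mem_branch hb hsb hsy h.symm)
    (fun h => not_adj_of_mem_branch hc hsc hsz h.symm) hab.2 hac.2 hbc.2)

theorem _root_.IsLongestPath.mem_branch_of_mem_branch {P : G.Walk u w} (hP : IsLongestPath G P)
    (h1 : _root_.Free claw G) (hx : x ∉ P.support) (hxy : G.Adj x y) (hb : b ∈ G.branch y x)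
    (hby : G.Adj b y) (hu : u ∈ G.branch y x) (hwy : w ≠ y) : w ∈ G.branch y x := by
  by_contra hw
  obtain ⟨d, hd, rfl, hds⟩ := exists_dart_of_mem_branch P hu hw hwy
  have hdx : d.snd ≠ x := fun h => hx (h ▸ P.dart_snd_mem_support_of_mem_darts hd)
  exact hP.not_adj_of_mem_darts hd hx hxy.symm
    (adj_of_free_claw h1 hb hby hxy d.adj.symm hds hdx)

theorem isGallaiVertex_of_isCutVertex_triangle (hG : G.Preconnected) (h1 : _root_.Free claw G)
    (h2 : _root_.Free P2_3P1 G) (hxy : G.Adj x y) (hyz : G.Adj y z) (hxz : G.Adj x z)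
    (hcx : IsCutVertex G x) (hcy : IsCutVertex G y) (hcz : IsCutVertex G z) :
    IsGallaiVertex G x := by
  intro u w P hP
  by_contra hx
  obtain ⟨a, ha, -⟩ := hcx.exists_adj_mem_branch hG hxy.ne'
  obtain ⟨b, hb, hby⟩ := hcy.exists_adj_mem_branch hG hxy.ne
  obtain ⟨c, hc, hcz⟩ := hcz.exists_adj_mem_branch hG hxz.ne
  have hlen : 2 ≤ P.length := by
    simpa using hP.2 _ _ (.cons hxy (.cons hyz .nil)) (by simp [hxy.ne, hxz.ne, hyz.ne])
  have hux : ¬G.Adj u x := fun h => hP.not_adj_start hx h.symm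
  have hwx : ¬G.Adj w x := fun h => hP.reverse.not_adj_start (by simpa using hx) h.symm
  have huw : ¬G.Adj u w := fun h => hP.not_adj_end_start hG hlen hx h.symm
  have hne : u ≠ w := by
    rintro rfl
    simp [Walk.length_eq_zero_iff.mpr (Walk.isPath_iff_nil.mp hP.1)] at hlen
  by_cases hua : u ∈ G.branch x y
  · have hwa : w ∈ G.branch x y := by
      by_contra hwa
      obtain ⟨d, hd, rfl, -⟩ :=
        exists_dart_of_mem_branch P hua hwa fun h => hx (h ▸ P.end_mem_support)
      exact hx (P.dart_fst_mem_support_of_mem_darts hd)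
    exact not_free_P2_3P1_of_mem_branch hG hxy hyz hxz hua hwa hne huw hb
      (branch_eq_of_adj hxy hxz.ne hyz.ne ▸ hc) hcz h2
  by_cases hub : u ∈ G.branch y x
  · have hwb := hP.mem_branch_of_mem_branch h1 hx hxy hb hby hub fun h => hwx (h ▸ hxy.symm)
    exact not_free_P2_3P1_of_mem_branch hG hxy.symm hxz hyz hub hwb hne huw ha hc hcz h2
  by_cases huc : u ∈ G.branch z x
  · have hwc := hP.mem_branch_of_mem_branch h1 hx hxz hc hcz huc fun h => hwx (h ▸ hxz.symm)
    exact not_free_P2_3P1_of_mem_branch hG hxz.symm hxy hyz.symm huc hwc hne huw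
      (branch_eq_of_adj hyz hxy.ne' hxz.ne' ▸ ha) hb hby h2
  exact hux (adj_of_notMem_branch hG h1 h2 hxy hyz hxz ha hb hby hc hcz
    (fun h => hx (h ▸ P.start_mem_support)) hua hub huc)

end SimpleGraph

theorem stmt_9_general {V : Type} (G : SimpleGraph V) (hG : G.Connected)
    (h1 : _root_.Free claw G) (h2 : _root_.Free P2_3P1 G)
    (x y z : V) (hxy : G.Adj x y) (hyz : G.Adj y z) (hxz : G.Adj x z)
    (hcx : IsCutVertex G x) (hcy : IsCutVertex G y) (hcz : IsCutVertex G z) :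
    IsGallaiVertex G x ∧ IsGallaiVertex G y ∧ IsGallaiVertex G z :=
  ⟨isGallaiVertex_of_isCutVertex_triangle hG.preconnected h1 h2 hxy hyz hxz hcx hcy hcz,
    isGallaiVertex_of_isCutVertex_triangle hG.preconnected h1 h2 hxy.symm hxz hyz hcy hcx hcz,
    isGallaiVertex_of_isCutVertex_triangle hG.preconnected h1 h2 hxz.symm hxy hyz.symm hcz hcx hcy⟩

/-- If a connected `(claw, P_2 + 3P_1)`-free graph has three cut vertices `x, y, z`
inducing a triangle, then each of them is a Gallai vertex. -/
theorem stmt_9 {V : Type} [Fintype V] (G : SimpleGraph V) (hG : G.Connected)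
    (h1 : _root_.Free claw G) (h2 : _root_.Free P2_3P1 G)
    (x y z : V) (hxy : G.Adj x y) (hyz : G.Adj y z) (hxz : G.Adj x z)
    (hcx : IsCutVertex G x) (hcy : IsCutVertex G y) (hcz : IsCutVertex G z) :
    IsGallaiVertex G x ∧ IsGallaiVertex G y ∧ IsGallaiVertex G z :=
  stmt_9_general G hG h1 h2 x y z hxy hyz hxz hcx hcy hcz
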